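/- For every x ∈ U and all indices μ, ν ∈ {1,2,3}: Σ_γ [ ∂_{x^γ} E_μ{}^{νγ} + Σ_α Γ^α{}_{γα} E_μ{}^{νγ} − Σ_α Γ^α{}_{γμ} E_α{}^{νγ} − Σ_α Γ^ν{}_{γα} E_μ{}^{αγ} ] = 0; equivalently, the subprincipal symbol [curl_sub]_μ{}^ν = (1/2) Σ_γ [ ∂_{x^γ} E_μ{}^{νγ} + Σ_α Γ^α{}_{γα} E_μ{}^{νγ} − Σ_α Γ^α{}_{γμ} E_α{}^{νγ} − Σ_α Γ^ν{}_{γα} E_μ{}^{αγ} ] of the operator curl vanishes identically (Lemma 3.3 of the paper). -/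

import Mathlib

noncomputable section

/-- The totally antisymmetric symbol on three indices, with `ε_{123} = 1`. -/
def epsSym (i j k : Fin 3) : ℝ :=
  if (i, j, k) = (0, 1, 2) ∨ (i, j, k) = (1, 2, 0) ∨ (i, j, k) = (2, 0, 1) then 1
  else if (i, j, k) = (2, 1, 0) ∨ (i, j, k) = (1, 0, 2) ∨ (i, j, k) = (0, 2, 1) then -1
  else 0

/-- The partial derivative `∂_{x^γ} f` of a scalar function on `ℝ³`. -/
def pd (γ : Fin 3) (f : (Fin 3 → ℝ) → ℝ) (x : Fin 3 → ℝ) : ℝ :=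
  fderiv ℝ f x (Pi.single γ 1)

/-- The entries `g^{αβ}` of the inverse metric. -/
def invMetric (g : (Fin 3 → ℝ) → Fin 3 → Fin 3 → ℝ) (x : Fin 3 → ℝ) :
    Matrix (Fin 3) (Fin 3) ℝ :=
  (Matrix.of (g x))⁻¹

/-- The Christoffel symbols
`Γ^α{}_{βγ} := (1/2) Σ_δ g^{αδ}(∂_β g_{δγ} + ∂_γ g_{δβ} − ∂_δ g_{βγ})`. -/
def christoffel (g : (Fin 3 → ℝ) → Fin 3 → Fin 3 → ℝ) (α β γ : Fin 3)
    (x : Fin 3 → ℝ) : ℝ :=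
  (1 / 2) * ∑ δ, invMetric g x α δ *
    (pd β (fun y => g y δ γ) x + pd γ (fun y => g y δ β) x - pd δ (fun y => g y β γ) x)

/-- The tensor `E_α{}^{βγ} := Σ_{μ,ν} g^{βμ} g^{γν} ρ ε_{αμν}` with `ρ := √(det g)`. -/
def Eud (g : (Fin 3 → ℝ) → Fin 3 → Fin 3 → ℝ) (α β γ : Fin 3) (x : Fin 3 → ℝ) : ℝ :=
  ∑ μ, ∑ ν, invMetric g x β μ * invMetric g x γ ν *
    (Real.sqrt (Matrix.of (g x)).det * epsSym α μ ν)

/-!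
The tensor is `E_μ^{νγ} = ρ⁻¹ g_{μδ} ε_{δνγ}`, by the identity
`N_{ia} N_{jb} N_{kc} ε_{abc} = det N · ε_{ijk}` for `N = g⁻¹`. Jacobi's formula gives
`∂_γ ρ⁻¹ = -ρ⁻¹ Γ^α_{γα}`, so the first two terms add up to `ρ⁻¹ ∂_γ g_{μδ} ε_{δνγ}`.
Lowering the index of `Γ^α_{γμ}` and contracting with `ε_{δνγ}`, antisymmetric in `δ, γ`,
turns the third term into the same expression. The last term vanishes because `Γ^ν_{γα}` is
symmetric and `E_μ^{αγ}` antisymmetric in `α, γ`.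
-/

open Finset Matrix Filter Topology

lemma epsSym_swap_right (i j k : Fin 3) : epsSym i k j = -epsSym i j k := by
  fin_cases i <;> fin_cases j <;> fin_cases k <;> norm_num [epsSym, Prod.ext_iff, Fin.ext_iff]

lemma epsSym_swap_outer (i j k : Fin 3) : epsSym k j i = -epsSym i j k := by
  fin_cases i <;> fin_cases j <;> fin_cases k <;> norm_num [epsSym, Prod.ext_iff, Fin.ext_iff]

lemma sum_sum_mul_eq_zero_of_symm_of_antisymm {ι : Type*} [Fintype ι] {S T : ι → ι → ℝ}
    (hS : ∀ a b, S a b = S b a) (hT : ∀ a b, T a b = -T b a) :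
    ∑ a, ∑ b, S a b * T a b = 0 := by
  have h : ∑ a, ∑ b, S a b * T a b = -∑ a, ∑ b, S a b * T a b :=
    calc ∑ a, ∑ b, S a b * T a b = ∑ a, ∑ b, S b a * T b a := sum_comm
      _ = -∑ a, ∑ b, S a b * T a b := by
        simp only [← sum_neg_distrib]
        exact sum_congr rfl fun a _ => sum_congr rfl fun b _ => by rw [hS b a, hT b a, mul_neg]
  linarith

lemma sum_mul_mul_mul_epsSym (N : Matrix (Fin 3) (Fin 3) ℝ) (i j k : Fin 3) :
    ∑ a, ∑ b, ∑ c, N i a * N j b * N k c * epsSym a b c = N.det * epsSym i j k := by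
  fin_cases i <;> fin_cases j <;> fin_cases k <;>
    simp [Fin.sum_univ_three, epsSym, det_fin_three] <;> ring

-- For singular `M` both sides vanish, since then `M⁻¹ = 0`.
lemma sum_inv_mul_inv_mul_epsSym (M : Matrix (Fin 3) (Fin 3) ℝ) (α β γ : Fin 3) :
    ∑ a, ∑ b, M⁻¹ β a * M⁻¹ γ b * epsSym α a b = M.det⁻¹ * ∑ d, M α d * epsSym d β γ := by
  rcases eq_or_ne M.det 0 with hM | hM
  · simp [nonsing_inv_apply_not_isUnit M (by simp [hM]), hM]
  have hMN : ∀ a c, ∑ d, M a d * M⁻¹ d c = if a = c then 1 else 0 := fun a c => by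
    rw [← mul_apply, mul_nonsing_inv M hM.isUnit, one_apply]
  calc ∑ a, ∑ b, M⁻¹ β a * M⁻¹ γ b * epsSym α a b
      = ∑ a, ∑ b, M⁻¹ β a * M⁻¹ γ b * ∑ c, (∑ d, M α d * M⁻¹ d c) * epsSym c a b := by
        simp [hMN]
    _ = ∑ d, M α d * ∑ c, ∑ a, ∑ b, M⁻¹ d c * M⁻¹ β a * M⁻¹ γ b * epsSym c a b := by
        simp only [Fin.sum_univ_three]; ring
    _ = M.det⁻¹ * ∑ d, M α d * epsSym d β γ := by
        simp only [sum_mul_mul_mul_epsSym, det_nonsing_inv, Ring.inverse_eq_inv', mul_sum]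
        exact sum_congr rfl fun d _ => by ring

section Calculus

variable {E : Type*} [NormedAddCommGroup E] [NormedSpace ℝ E]
  {A : E → Matrix (Fin 3) (Fin 3) ℝ} {A' : Fin 3 → Fin 3 → E →L[ℝ] ℝ} {x : E}

theorem hasFDerivAt_det_fin_three (hA : ∀ i j, HasFDerivAt (fun y => A y i j) (A' i j) x) :
    HasFDerivAt (fun y => (A y).det) (∑ i, ∑ j, (A x).adjugate i j • A' j i) x := by
  have hprod : ∀ i j k, HasFDerivAt (fun y => A y 0 i * A y 1 j * A y 2 k)
      ((A x 0 i * A x 1 j) • A' 2 k + A x 2 k • (A x 0 i • A' 1 j + A x 1 j • A' 0 i)) x :=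
    fun i j k => ((hA 0 i).mul (hA 1 j)).mul (hA 2 k)
  have hexp := (((((hprod 0 1 2).sub (hprod 0 2 1)).sub (hprod 1 0 2)).add
    (hprod 1 2 0)).add (hprod 2 0 1)).sub (hprod 2 1 0)
  refine (hexp.congr_of_eventuallyEq (.of_forall fun y => det_fin_three (A y))).congr_fderiv ?_
  ext v
  simp only [smul_add, _root_.sub_apply, _root_.add_apply, _root_.smul_apply, smul_eq_mul,
    adjugate_fin_three, of_apply, cons_val', cons_val_fin_one, Fin.sum_univ_three, cons_val_zero,
    cons_val_one, Matrix.cons_val]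
  ring

theorem hasFDerivAt_inv_sqrt_det (hA : ∀ i j, HasFDerivAt (fun y => A y i j) (A' i j) x)
    (hdet : 0 < (A x).det) :
    HasFDerivAt (fun y => (√(A y).det)⁻¹)
      (-((√(A x).det)⁻¹ * 2⁻¹) • ∑ i, ∑ j, (A x)⁻¹ i j • A' j i) x := by
  have hρ : √(A x).det ≠ 0 := (Real.sqrt_pos.mpr hdet).ne'
  refine ((hasDerivAt_inv hρ).comp_hasFDerivAt x
    ((hasFDerivAt_det_fin_three hA).sqrt hdet.ne')).congr_fderiv ?_
  have hadj : (A x).adjugate = (A x).det • (A x)⁻¹ := by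
    rw [Matrix.inv_def, smul_smul, Ring.inverse_eq_inv', mul_inv_cancel₀ hdet.ne', one_smul]
  have hsum : ∑ i, ∑ j, (A x).adjugate i j • A' j i
      = (A x).det • ∑ i, ∑ j, (A x)⁻¹ i j • A' j i := by
    simp only [hadj, Matrix.smul_apply, smul_sum, smul_smul, smul_eq_mul]
  rw [hsum, smul_smul, smul_smul]
  congr 1
  field_simp
  rw [Real.sq_sqrt hdet.le]

end Calculus

section Metric

variable (g : (Fin 3 → ℝ) → Fin 3 → Fin 3 → ℝ)

lemma Eud_eq_inv_sqrt_det_mul_sum (α β γ : Fin 3) (y : Fin 3 → ℝ) :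
    Eud g α β γ y = (√(of (g y)).det)⁻¹ * ∑ δ, g y α δ * epsSym δ β γ := by
  have h := sum_inv_mul_inv_mul_epsSym (of (g y)) α β γ
  calc Eud g α β γ y
      = √(of (g y)).det * ∑ a, ∑ b, (of (g y))⁻¹ β a * (of (g y))⁻¹ γ b * epsSym α a b := by
        simp only [Eud, invMetric, mul_sum]
        exact sum_congr rfl fun _ _ => sum_congr rfl fun _ _ => by ring
    _ = _ := by rw [h, ← mul_assoc, ← div_eq_mul_inv, Real.sqrt_div_self', one_div]; rfl

lemma Eud_antisymm (α β γ : Fin 3) (y : Fin 3 → ℝ) : Eud g α β γ y = -Eud g α γ β y := by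
  simp only [Eud_eq_inv_sqrt_det_mul_sum, epsSym_swap_right _ γ, mul_neg, sum_neg_distrib]

variable {g} {x : Fin 3 → ℝ}

lemma pd_swap_of_symm (hsym : ∀ᶠ y in 𝓝 x, ∀ a b, g y a b = g y b a) (γ a b : Fin 3) :
    pd γ (fun y => g y a b) x = pd γ (fun y => g y b a) x := by
  unfold pd
  rw [EventuallyEq.fderiv_eq (hsym.mono fun y hy => hy a b)]

lemma invMetric_symm (hsym : ∀ a b, g x a b = g x b a) (a b : Fin 3) :
    invMetric g x a b = invMetric g x b a :=
  ((IsSymm.ext fun i j => hsym j i : (of (g x)).IsSymm).inv.apply a b).symm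

lemma christoffel_symm (hsym : ∀ᶠ y in 𝓝 x, ∀ a b, g y a b = g y b a) (α β γ : Fin 3) :
    christoffel g α β γ x = christoffel g α γ β x := by
  simp only [christoffel, pd_swap_of_symm hsym _ β γ]
  exact congrArg _ (sum_congr rfl fun _ _ => by ring)

lemma sum_christoffel_self (hsym : ∀ᶠ y in 𝓝 x, ∀ a b, g y a b = g y b a) (γ : Fin 3) :
    ∑ α, christoffel g α γ α x
      = 2⁻¹ * ∑ α, ∑ δ, invMetric g x α δ * pd γ (fun y => g y δ α) x := by
  have hanti : ∑ α, ∑ δ, invMetric g x α δ *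
      (pd α (fun y => g y δ γ) x - pd δ (fun y => g y γ α) x) = 0 :=
    sum_sum_mul_eq_zero_of_symm_of_antisymm (invMetric_symm hsym.self_of_nhds)
      fun α δ => by rw [pd_swap_of_symm hsym δ γ α, pd_swap_of_symm hsym α δ γ]; ring
  calc ∑ α, christoffel g α γ α x
      = 2⁻¹ * ∑ α, ∑ δ, (invMetric g x α δ * pd γ (fun y => g y δ α) x + invMetric g x α δ *
          (pd α (fun y => g y δ γ) x - pd δ (fun y => g y γ α) x)) := by
        simp only [christoffel, mul_sum]
        exact sum_congr rfl fun _ _ => sum_congr rfl fun _ _ => by ring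
    _ = 2⁻¹ * ∑ α, ∑ δ, invMetric g x α δ * pd γ (fun y => g y δ α) x := by
        simp only [sum_add_distrib, hanti, add_zero]

lemma sum_metric_mul_christoffel (hdet : IsUnit (of (g x)).det) (δ γ μ : Fin 3) :
    ∑ α, g x δ α * christoffel g α γ μ x
      = 2⁻¹ * (pd γ (fun y => g y δ μ) x + pd μ (fun y => g y δ γ) x
        - pd δ (fun y => g y γ μ) x) := by
  have hinv : ∀ ε, ∑ α, g x δ α * invMetric g x α ε = if δ = ε then 1 else 0 := fun ε => by
    change ∑ α, of (g x) δ α * (of (g x))⁻¹ α ε = _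
    rw [← mul_apply, mul_nonsing_inv _ hdet, one_apply]
  calc ∑ α, g x δ α * christoffel g α γ μ x
      = 2⁻¹ * ∑ ε, (∑ α, g x δ α * invMetric g x α ε) * (pd γ (fun y => g y ε μ) x
          + pd μ (fun y => g y ε γ) x - pd ε (fun y => g y γ μ) x) := by
        simp only [christoffel, mul_sum, sum_mul]
        rw [sum_comm]
        exact sum_congr rfl fun _ _ => sum_congr rfl fun _ _ => by ring
    _ = _ := by simp [hinv]

lemma sum_sum_christoffel_mul_Eud_eq_zero (hsym : ∀ᶠ y in 𝓝 x, ∀ a b, g y a b = g y b a)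
    (μ ν : Fin 3) : ∑ γ, ∑ α, christoffel g ν γ α x * Eud g μ α γ x = 0 :=
  sum_sum_mul_eq_zero_of_symm_of_antisymm (christoffel_symm hsym ν)
    fun γ α => Eud_antisymm g μ α γ x

lemma sum_sum_christoffel_lower_mul_epsSym (hsym : ∀ᶠ y in 𝓝 x, ∀ a b, g y a b = g y b a)
    (μ ν : Fin 3) :
    ∑ γ, ∑ δ, 2⁻¹ * (pd γ (fun y => g y δ μ) x + pd μ (fun y => g y δ γ) x
        - pd δ (fun y => g y γ μ) x) * epsSym δ ν γ
      = ∑ γ, ∑ δ, pd γ (fun y => g y μ δ) x * epsSym δ ν γ := by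
  have hsymm : ∑ γ, ∑ δ, pd μ (fun y => g y δ γ) x * epsSym δ ν γ = 0 :=
    sum_sum_mul_eq_zero_of_symm_of_antisymm (fun γ δ => pd_swap_of_symm hsym μ δ γ)
      fun γ δ => epsSym_swap_outer γ ν δ
  have hanti : ∑ γ, ∑ δ, pd δ (fun y => g y γ μ) x * epsSym δ ν γ
      = -∑ γ, ∑ δ, pd γ (fun y => g y μ δ) x * epsSym δ ν γ := by
    rw [sum_comm, ← sum_neg_distrib]
    refine sum_congr rfl fun a _ => ?_
    rw [← sum_neg_distrib]
    refine sum_congr rfl fun b _ => ?_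
    rw [epsSym_swap_outer b ν a, pd_swap_of_symm hsym a b μ, mul_neg]
  have hsplit : ∑ γ, ∑ δ, 2⁻¹ * (pd γ (fun y => g y δ μ) x + pd μ (fun y => g y δ γ) x
        - pd δ (fun y => g y γ μ) x) * epsSym δ ν γ
      = 2⁻¹ * (∑ γ, ∑ δ, pd γ (fun y => g y μ δ) x * epsSym δ ν γ
        + ∑ γ, ∑ δ, pd μ (fun y => g y δ γ) x * epsSym δ ν γ
        - ∑ γ, ∑ δ, pd δ (fun y => g y γ μ) x * epsSym δ ν γ) := by
    simp only [← sum_add_distrib, ← sum_sub_distrib, mul_sum, pd_swap_of_symm hsym _ _ μ]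
    exact sum_congr rfl fun _ _ => sum_congr rfl fun _ _ => by ring
  rw [hsplit, hsymm, hanti]
  ring

lemma sum_sum_christoffel_mul_Eud_eq (hdet : IsUnit (of (g x)).det)
    (hsym : ∀ᶠ y in 𝓝 x, ∀ a b, g y a b = g y b a) (μ ν : Fin 3) :
    ∑ γ, ∑ α, christoffel g α γ μ x * Eud g α ν γ x
      = (√(of (g x)).det)⁻¹ * ∑ γ, ∑ δ, pd γ (fun y => g y μ δ) x * epsSym δ ν γ := by
  rw [← sum_sum_christoffel_lower_mul_epsSym hsym, mul_sum]
  refine sum_congr rfl fun γ _ => ?_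
  simp only [← sum_metric_mul_christoffel hdet, Eud_eq_inv_sqrt_det_mul_sum, mul_sum, sum_mul]
  rw [sum_comm]
  refine sum_congr rfl fun δ _ => sum_congr rfl fun α _ => ?_
  rw [hsym.self_of_nhds α δ]
  ring

lemma pd_Eud_add_sum_christoffel_mul_Eud
    (hdiff : ∀ i j, DifferentiableAt ℝ (fun y => g y i j) x) (hdet : 0 < (of (g x)).det)
    (hsym : ∀ᶠ y in 𝓝 x, ∀ a b, g y a b = g y b a) (μ ν γ κ : Fin 3) :
    pd γ (fun y => Eud g μ ν κ y) x + (∑ α, christoffel g α γ α x) * Eud g μ ν κ x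
      = (√(of (g x)).det)⁻¹ * ∑ δ, pd γ (fun y => g y μ δ) x * epsSym δ ν κ := by
  have hρ := hasFDerivAt_inv_sqrt_det (A := fun y => of (g y))
    (fun i j => (hdiff i j).hasFDerivAt) hdet
  have hS := HasFDerivAt.fun_sum (u := univ) fun δ _ =>
    (hdiff μ δ).hasFDerivAt.mul_const (epsSym δ ν κ)
  simp only [Eud_eq_inv_sqrt_det_mul_sum g μ ν κ]
  rw [pd, (hρ.fun_mul hS).fderiv, sum_christoffel_self hsym]
  simp only [_root_.add_apply, _root_.smul_apply, _root_.sum_apply, smul_eq_mul,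
    mul_comm (epsSym _ _ _), neg_mul, mul_neg, invMetric, pd]
  ring

end Metric

/-- **Lemma 3.3 of the paper**: for a smooth Riemannian metric `g` on an open set
`U ⊆ ℝ³`, for every `x ∈ U` and all indices `μ, ν`,
`Σ_γ [∂_{x^γ} E_μ{}^{νγ} + Σ_α Γ^α{}_{γα} E_μ{}^{νγ} − Σ_α Γ^α{}_{γμ} E_α{}^{νγ}
  − Σ_α Γ^ν{}_{γα} E_μ{}^{αγ}] = 0`;
equivalently, the subprincipal symbol of the operator `curl` vanishes identically. -/
theorem subprincipal_symbol_of_curl_vanishes (U : Set (Fin 3 → ℝ)) (hU : IsOpen U)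
    (g : (Fin 3 → ℝ) → Fin 3 → Fin 3 → ℝ)
    (hg : ∀ α β, ContDiffOn ℝ (⊤ : ℕ∞) (fun x => g x α β) U)
    (hgsym : ∀ x ∈ U, ∀ α β, g x α β = g x β α)
    (hgpos : ∀ x ∈ U, (Matrix.of (g x)).PosDef) :
    ∀ x ∈ U, ∀ μ ν : Fin 3,
      ∑ γ, (pd γ (fun y => Eud g μ ν γ y) x
          + (∑ α, christoffel g α γ α x * Eud g μ ν γ x)
          - (∑ α, christoffel g α γ μ x * Eud g α ν γ x)
          - (∑ α, christoffel g ν γ α x * Eud g μ α γ x)) = 0 := by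
  intro x hx μ ν
  have hUx : U ∈ 𝓝 x := hU.mem_nhds hx
  have hsym : ∀ᶠ y in 𝓝 x, ∀ a b, g y a b = g y b a := eventually_of_mem hUx hgsym
  have hdiff : ∀ i j, DifferentiableAt ℝ (fun y => g y i j) x := fun i j =>
    ((hg i j).contDiffAt hUx).differentiableAt (by simp)
  have hdet := (hgpos x hx).det_pos
  simp only [← sum_mul, sum_sub_distrib, pd_Eud_add_sum_christoffel_mul_Eud hdiff hdet hsym,
    sum_sum_christoffel_mul_Eud_eq hdet.ne'.isUnit hsym, sum_sum_christoffel_mul_Eud_eq_zero hsym,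
    ← mul_sum, sub_self]
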